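/- arXiv:1901.08727 — 2 statements merged into one kernel-verified Lean document; each statement's English description precedes it below -/
import Mathlib

section
/- If θ_max < n/(n + 2(1 + ζ)), then F has exactly one fixed point in Δ_n, i.e., the equilibrium social power of the model is unique. -/
open Matrix

/-- `W(x) = diag(x) + (I - diag(x)) C` -/
noncomputable def Wmat {n : ℕ} (C : Matrix (Fin n) (Fin n) ℝ) (x : Fin n → ℝ) :
    Matrix (Fin n) (Fin n) ℝ :=
  Matrix.diagonal x + (1 - Matrix.diagonal x) * C

/-- `F(x) = (I - Θ)(I - W(x)ᵀΘ)⁻¹ (1/n) 1_n` -/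
noncomputable def Fmap {n : ℕ} (C : Matrix (Fin n) (Fin n) ℝ) (θ : Fin n → ℝ)
    (x : Fin n → ℝ) : Fin n → ℝ :=
  ((1 - Matrix.diagonal θ) * (1 - (Wmat C x)ᵀ * Matrix.diagonal θ)⁻¹).mulVec
    (fun _ => 1 / (n : ℝ))

/-- The simplex `Δ_n`. -/
def simplex (n : ℕ) : Set (Fin n → ℝ) := {x | (∀ i, 0 ≤ x i) ∧ ∑ i, x i = 1}

/-!
The map `F` is a contraction of `Δ_n` for the `ℓ¹` distance, so Banach's fixed point theorem gives
existence and uniqueness. Put `u(x) = (I - W(x)ᵀΘ)⁻¹ 1/n`, so that `F(x) = (I - Θ) u(x)`. The matrix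
`W(x)ᵀΘ` is nonnegative with column sums `θ_j < 1`, which gives the weighted `ℓ¹` bound
`∑ (1 - θ_j) |w_j| ≤ ‖(I - W(x)ᵀΘ) w‖₁`; it yields invertibility, `u ≥ 1/n` and `F(Δ_n) ⊆ Δ_n`.
Since `W(x) - W(z) = diag(x - z)(I - C)`, the difference `u(x) - u(z)` solves the same equation with
a source of `ℓ¹` norm at most `2 ∑ θ_k u_k(z) |x_k - z_k|`, and `θ_k u_k(z) ≤ θmax (1/n + s)` with
`(1 - θmax) s ≤ θave`. The hypothesis on `θmax` is what makes `2 θmax (1/n + θave/(1 - θmax)) < 1`.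
-/

section ColumnSubstochastic

variable {ι : Type*} [Fintype ι] [DecidableEq ι] {Q : Matrix ι ι ℝ}

lemma sum_one_sub_mulVec (w : ι → ℝ) :
    ∑ j, ((1 - Q) *ᵥ w) j = ∑ j, (1 - ∑ i, Q i j) * w j := by
  rw [sub_mulVec, one_mulVec]
  simp only [Pi.sub_apply, Finset.sum_sub_distrib, sub_mul, one_mul, mulVec, dotProduct,
    Finset.sum_mul]
  rw [Finset.sum_comm]

lemma sum_one_sub_mul_abs_le (hQ : ∀ i j, 0 ≤ Q i j) (w : ι → ℝ) :
    ∑ j, (1 - ∑ i, Q i j) * |w j| ≤ ∑ j, |((1 - Q) *ᵥ w) j| := by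
  have hw : ∀ j, |w j| ≤ |((1 - Q) *ᵥ w) j| + ∑ i, Q j i * |w i| := fun j => by
    have : w j = ((1 - Q) *ᵥ w) j + ∑ i, Q j i * w i := by
      rw [sub_mulVec, one_mulVec, Pi.sub_apply, mulVec, dotProduct, sub_add_cancel]
    calc |w j| ≤ |((1 - Q) *ᵥ w) j| + |∑ i, Q j i * w i| := this ▸ abs_add_le _ _
      _ ≤ _ := by
        gcongr
        refine (Finset.abs_sum_le_sum_abs _ _).trans_eq (Finset.sum_congr rfl fun i _ => ?_)
        rw [abs_mul, abs_of_nonneg (hQ j i)]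
  have := Finset.sum_le_sum fun j (_ : j ∈ Finset.univ) => hw j
  rw [Finset.sum_add_distrib, Finset.sum_comm] at this
  simp only [sub_mul, one_mul, Finset.sum_sub_distrib, Finset.sum_mul]
  linarith

lemma nonneg_of_one_sub_mulVec_nonneg (hQ : ∀ i j, 0 ≤ Q i j) (hcol : ∀ j, ∑ i, Q i j < 1)
    {w : ι → ℝ} (hw : ∀ j, 0 ≤ ((1 - Q) *ᵥ w) j) (j : ι) : 0 ≤ w j := by
  have hsum : ∑ j, (1 - ∑ i, Q i j) * (|w j| - w j) ≤ 0 := by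
    have := sum_one_sub_mul_abs_le hQ w
    simp only [abs_of_nonneg (hw _), sum_one_sub_mulVec] at this
    simpa [mul_sub, Finset.sum_sub_distrib] using this
  have hterm : ∀ j ∈ Finset.univ, 0 ≤ (1 - ∑ i, Q i j) * (|w j| - w j) := fun j _ =>
    mul_nonneg (sub_nonneg.2 (hcol j).le) (sub_nonneg.2 (le_abs_self _))
  have := (Finset.sum_eq_zero_iff_of_nonneg hterm).1 (le_antisymm hsum (Finset.sum_nonneg hterm))
    j (Finset.mem_univ j)
  rcases mul_eq_zero.1 this with h | h
  · linarith [hcol j]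
  · linarith [abs_nonneg (w j)]

lemma isUnit_det_one_sub (hQ : ∀ i j, 0 ≤ Q i j) (hcol : ∀ j, ∑ i, Q i j < 1) :
    IsUnit (1 - Q).det := by
  refine isUnit_iff_ne_zero.2 fun hdet => ?_
  obtain ⟨w, hw0, hw⟩ := exists_mulVec_eq_zero_iff.2 hdet
  refine hw0 (funext fun j => le_antisymm ?_ ?_)
  · have := nonneg_of_one_sub_mulVec_nonneg hQ hcol (w := -w) (by simp [mulVec_neg, hw]) j
    simpa using this
  · exact nonneg_of_one_sub_mulVec_nonneg hQ hcol (by simp [hw]) j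

end ColumnSubstochastic

section TransposeMulDiagonal

variable {ι : Type*} [Fintype ι] [DecidableEq ι] {W : Matrix ι ι ℝ} {θ : ι → ℝ}

lemma transpose_mul_diagonal_nonneg (hW : W ∈ rowStochastic ℝ ι) (hθ : ∀ i, 0 ≤ θ i)
    (i j : ι) : 0 ≤ (Wᵀ * diagonal θ) i j := by
  rw [mul_diagonal, transpose_apply]
  exact mul_nonneg (nonneg_of_mem_rowStochastic hW) (hθ j)

lemma sum_transpose_mul_diagonal_apply (hW : W ∈ rowStochastic ℝ ι) (j : ι) :
    ∑ i, (Wᵀ * diagonal θ) i j = θ j := by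
  simp only [mul_diagonal, transpose_apply, ← Finset.sum_mul, sum_row_of_mem_rowStochastic hW,
    one_mul]

end TransposeMulDiagonal

lemma sum_abs_vecMul_one_sub_le {ι : Type*} [Fintype ι] [DecidableEq ι] {C : Matrix ι ι ℝ}
    (hC : C ∈ rowStochastic ℝ ι) (v : ι → ℝ) :
    ∑ j, |(v ᵥ* (1 - C)) j| ≤ 2 * ∑ i, |v i| := by
  calc ∑ j, |(v ᵥ* (1 - C)) j| = ∑ j, |v j - ∑ i, v i * C i j| := by
        rw [vecMul_sub, vecMul_one]
        simp [vecMul, dotProduct]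
    _ ≤ ∑ j, (|v j| + ∑ i, |v i| * C i j) := by
        gcongr with j
        refine (abs_sub _ _).trans (add_le_add_right ?_ _)
        refine (Finset.abs_sum_le_sum_abs _ _).trans_eq (Finset.sum_congr rfl fun i _ => ?_)
        rw [abs_mul, abs_of_nonneg (nonneg_of_mem_rowStochastic hC)]
    _ = 2 * ∑ i, |v i| := by
        rw [Finset.sum_add_distrib, Finset.sum_comm]
        simp only [← Finset.mul_sum, sum_row_of_mem_rowStochastic hC, mul_one]
        ring

theorem existsUnique_fixedPoint_of_sum_abs_le {ι : Type*} [Fintype ι] {s : Set (ι → ℝ)}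
    (hs : IsClosed s) (hne : s.Nonempty) {f : (ι → ℝ) → ι → ℝ} (hfs : Set.MapsTo f s s) {L : ℝ}
    (hL : L < 1) (hf : ∀ x ∈ s, ∀ y ∈ s, ∑ i, |f x i - f y i| ≤ L * ∑ i, |x i - y i|) :
    ∃! x, x ∈ s ∧ f x = x := by
  set t : Set (PiLp 1 fun _ : ι => ℝ) := WithLp.ofLp ⁻¹' s
  set g : PiLp 1 (fun _ : ι => ℝ) → PiLp 1 (fun _ : ι => ℝ) := fun p => WithLp.toLp 1 (f p)
  have hdist : ∀ p q : PiLp 1 (fun _ : ι => ℝ), dist p q = ∑ i, |p i - q i| := fun p q => by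
    simp [PiLp.dist_eq_of_L1, Real.dist_eq]
  have hgt : Set.MapsTo g t t := fun p hp => hfs hp
  have hg : ContractingWith L.toNNReal (hgt.restrict g t t) := by
    refine ⟨by simpa using hL, LipschitzWith.of_dist_le_mul fun p q => ?_⟩
    simp only [Subtype.dist_eq, Set.MapsTo.val_restrict_apply, hdist]
    exact (hf _ p.2 _ q.2).trans (by gcongr; exact Real.le_coe_toNNReal L)
  obtain ⟨x, hx⟩ := hne
  obtain ⟨y, hyt, hy, -⟩ := hg.exists_fixedPoint'
    (hs.preimage (PiLp.continuous_ofLp 1 _)).isComplete hgt (x := WithLp.toLp 1 x) hx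
    (edist_ne_top _ _)
  refine ⟨y, ⟨hyt, congrArg WithLp.ofLp hy⟩, fun z ⟨hz, hfz⟩ => ?_⟩
  have := hg.fixedPoint_unique' (x := ⟨WithLp.toLp 1 z, hz⟩) (y := ⟨y, hyt⟩)
    (Subtype.ext (congrArg (WithLp.toLp 1) hfz)) (Subtype.ext hy)
  exact congrArg (fun p : t => WithLp.ofLp p.1) this

section Simplex

variable {n : ℕ}

lemma le_one_of_mem_simplex {x : Fin n → ℝ} (hx : x ∈ simplex n) (i : Fin n) : x i ≤ 1 :=
  hx.2 ▸ Finset.single_le_sum (fun j _ => hx.1 j) (Finset.mem_univ i)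

lemma isClosed_simplex : IsClosed (simplex n) := by
  rw [simplex, Set.ofPred_and, Set.ofPred_forall]
  exact (isClosed_iInter fun i => isClosed_le continuous_const (continuous_apply i)).inter
    (isClosed_eq (continuous_finsetSum _ fun i _ => continuous_apply i) continuous_const)

lemma const_mem_simplex (hn : 0 < n) : (fun _ => 1 / (n : ℝ)) ∈ simplex n :=
  ⟨fun _ => by positivity, by simp [Finset.card_univ]; field_simp⟩

end Simplex

noncomputable def Umap {n : ℕ} (C : Matrix (Fin n) (Fin n) ℝ) (θ : Fin n → ℝ)
    (x : Fin n → ℝ) : Fin n → ℝ :=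
  (1 - (Wmat C x)ᵀ * diagonal θ)⁻¹ *ᵥ fun _ => 1 / (n : ℝ)

section SocialPower

variable {n : ℕ} {C : Matrix (Fin n) (Fin n) ℝ} {θ x z : Fin n → ℝ}

lemma Wmat_eq (C : Matrix (Fin n) (Fin n) ℝ) (x : Fin n → ℝ) :
    Wmat C x = C + diagonal x * (1 - C) := by
  simp only [Wmat, sub_mul, mul_sub, one_mul, mul_one]
  abel

lemma Wmat_sub_Wmat (C : Matrix (Fin n) (Fin n) ℝ) (x z : Fin n → ℝ) :
    Wmat C x - Wmat C z = diagonal (x - z) * (1 - C) := by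
  rw [Wmat_eq, Wmat_eq,
    show diagonal (x - z) = diagonal x - diagonal z from (diagonal_sub x z).symm, sub_mul]
  abel

lemma Wmat_mem_rowStochastic (hC : C ∈ rowStochastic ℝ (Fin n)) (hx0 : ∀ i, 0 ≤ x i)
    (hx1 : ∀ i, x i ≤ 1) : Wmat C x ∈ rowStochastic ℝ (Fin n) := by
  rw [mem_rowStochastic_iff_sum] at hC ⊢
  have hW : ∀ i j, Wmat C x i j = (1 - x i) * C i j + if i = j then x i else 0 := fun i j => by
    rw [Wmat_eq]
    by_cases h : i = j <;> simp [h, one_apply] <;> ring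
  refine ⟨fun i j => ?_, fun i => ?_⟩
  · rw [hW]
    have := mul_nonneg (sub_nonneg.2 (hx1 i)) (hC.1 i j)
    split_ifs <;> linarith [hx0 i]
  · simp only [hW, Finset.sum_add_distrib, ← Finset.mul_sum, hC.2, Finset.sum_ite_eq,
      Finset.mem_univ, if_true]
    ring

lemma Fmap_apply (C : Matrix (Fin n) (Fin n) ℝ) (θ x : Fin n → ℝ) (j : Fin n) :
    Fmap C θ x j = (1 - θ j) * Umap C θ x j := by
  rw [Fmap, ← mulVec_mulVec, ← diagonal_one, diagonal_sub, mulVec_diagonal]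
  rfl

lemma one_sub_mulVec_Umap (hW : Wmat C x ∈ rowStochastic ℝ (Fin n)) (hθ0 : ∀ i, 0 ≤ θ i)
    (hθ1 : ∀ i, θ i < 1) :
    (1 - (Wmat C x)ᵀ * diagonal θ) *ᵥ Umap C θ x = fun _ => 1 / (n : ℝ) := by
  have hdet := isUnit_det_one_sub (transpose_mul_diagonal_nonneg hW hθ0)
    (fun j => (sum_transpose_mul_diagonal_apply hW j).trans_lt (hθ1 j))
  rw [Umap, mulVec_mulVec, mul_nonsing_inv _ hdet, one_mulVec]

lemma Umap_eq (hW : Wmat C x ∈ rowStochastic ℝ (Fin n)) (hθ0 : ∀ i, 0 ≤ θ i)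
    (hθ1 : ∀ i, θ i < 1) (j : Fin n) :
    Umap C θ x j = 1 / n + ∑ i, Wmat C x i j * (θ i * Umap C θ x i) := by
  have := congrFun (one_sub_mulVec_Umap hW hθ0 hθ1) j
  rw [sub_mulVec, one_mulVec, Pi.sub_apply] at this
  simp only [mulVec, dotProduct, mul_diagonal, transpose_apply, mul_assoc] at this
  linarith

lemma Umap_nonneg (hW : Wmat C x ∈ rowStochastic ℝ (Fin n)) (hθ0 : ∀ i, 0 ≤ θ i)
    (hθ1 : ∀ i, θ i < 1) (j : Fin n) : 0 ≤ Umap C θ x j :=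
  nonneg_of_one_sub_mulVec_nonneg (transpose_mul_diagonal_nonneg hW hθ0)
    (fun j => (sum_transpose_mul_diagonal_apply hW j).trans_lt (hθ1 j))
    (fun j => by rw [one_sub_mulVec_Umap hW hθ0 hθ1]; positivity) j

lemma sum_one_sub_mul_Umap (hn : 0 < n) (hW : Wmat C x ∈ rowStochastic ℝ (Fin n))
    (hθ0 : ∀ i, 0 ≤ θ i) (hθ1 : ∀ i, θ i < 1) :
    ∑ j, (1 - θ j) * Umap C θ x j = 1 := by
  have := sum_one_sub_mulVec (Q := (Wmat C x)ᵀ * diagonal θ) (Umap C θ x)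
  simp only [one_sub_mulVec_Umap hW hθ0 hθ1, sum_transpose_mul_diagonal_apply hW] at this
  rw [← this, Finset.sum_const, Finset.card_univ, Fintype.card_fin, nsmul_eq_mul]
  field_simp

lemma Fmap_mem_simplex (hn : 0 < n) (hW : Wmat C x ∈ rowStochastic ℝ (Fin n))
    (hθ0 : ∀ i, 0 ≤ θ i) (hθ1 : ∀ i, θ i < 1) : Fmap C θ x ∈ simplex n := by
  refine ⟨fun j => ?_, ?_⟩
  · rw [Fmap_apply]
    exact mul_nonneg (sub_nonneg.2 (hθ1 j).le) (Umap_nonneg hW hθ0 hθ1 j)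
  · simp only [Fmap_apply, sum_one_sub_mul_Umap hn hW hθ0 hθ1]

lemma sum_abs_Fmap_sub_le (hC : C ∈ rowStochastic ℝ (Fin n))
    (hWx : Wmat C x ∈ rowStochastic ℝ (Fin n)) (hWz : Wmat C z ∈ rowStochastic ℝ (Fin n))
    (hθ0 : ∀ i, 0 ≤ θ i) (hθ1 : ∀ i, θ i < 1) :
    ∑ j, |Fmap C θ x j - Fmap C θ z j| ≤ 2 * ∑ k, θ k * Umap C θ z k * |x k - z k| := by
  set w := Umap C θ x - Umap C θ z
  set v : Fin n → ℝ := fun k => (x k - z k) * (θ k * Umap C θ z k)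
  -- `(I - W(x)ᵀΘ) (u(x) - u(z)) = (W(x) - W(z))ᵀ Θ u(z)`
  have hw : (1 - (Wmat C x)ᵀ * diagonal θ) *ᵥ w = v ᵥ* (1 - C) := by
    have hz := one_sub_mulVec_Umap hWz hθ0 hθ1
    rw [mulVec_sub, one_sub_mulVec_Umap hWx hθ0 hθ1, ← hz, ← sub_mulVec,
      sub_sub_sub_cancel_left, ← sub_mul, ← transpose_sub, Wmat_sub_Wmat, transpose_mul,
      diagonal_transpose, ← mulVec_mulVec, ← mulVec_mulVec, mulVec_transpose]
    congr 1
    ext k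
    simp only [mulVec_diagonal, v, Pi.sub_apply]
  calc ∑ j, |Fmap C θ x j - Fmap C θ z j|
        = ∑ j, (1 - ∑ i, ((Wmat C x)ᵀ * diagonal θ) i j) * |w j| := by
        refine Finset.sum_congr rfl fun j _ => ?_
        rw [Fmap_apply, Fmap_apply, ← mul_sub, abs_mul, abs_of_nonneg (sub_nonneg.2 (hθ1 j).le),
          sum_transpose_mul_diagonal_apply hWx]
        rfl
    _ ≤ ∑ j, |(v ᵥ* (1 - C)) j| :=
        hw ▸ sum_one_sub_mul_abs_le (transpose_mul_diagonal_nonneg hWx hθ0) w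
    _ ≤ 2 * ∑ k, |v k| := sum_abs_vecMul_one_sub_le hC v
    _ = 2 * ∑ k, θ k * Umap C θ z k * |x k - z k| := by
        simp only [v, abs_mul, abs_of_nonneg (mul_nonneg (hθ0 _) (Umap_nonneg hWz hθ0 hθ1 _)),
          mul_comm |x _ - z _|]

lemma one_div_le_Umap (hW : Wmat C x ∈ rowStochastic ℝ (Fin n)) (hθ0 : ∀ i, 0 ≤ θ i)
    (hθ1 : ∀ i, θ i < 1) (j : Fin n) : 1 / n ≤ Umap C θ x j := by
  rw [Umap_eq hW hθ0 hθ1 j, le_add_iff_nonneg_right]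
  exact Finset.sum_nonneg fun i _ => mul_nonneg (nonneg_of_mem_rowStochastic hW)
    (mul_nonneg (hθ0 i) (Umap_nonneg hW hθ0 hθ1 i))

lemma Umap_le (hW : Wmat C x ∈ rowStochastic ℝ (Fin n)) (hθ0 : ∀ i, 0 ≤ θ i)
    (hθ1 : ∀ i, θ i < 1) (j : Fin n) :
    Umap C θ x j ≤ 1 / n + ∑ i, θ i * Umap C θ x i := by
  rw [Umap_eq hW hθ0 hθ1 j, add_le_add_iff_left]
  exact Finset.sum_le_sum fun i _ => mul_le_of_le_one_left
    (mul_nonneg (hθ0 i) (Umap_nonneg hW hθ0 hθ1 i)) (le_one_of_mem_rowStochastic hW)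

lemma one_sub_mul_sum_mul_Umap_le (hn : 0 < n) (hW : Wmat C x ∈ rowStochastic ℝ (Fin n))
    (hθ0 : ∀ i, 0 ≤ θ i) (hθ1 : ∀ i, θ i < 1) {θmax : ℝ} (hθmax : ∀ i, θ i ≤ θmax) :
    (1 - θmax) * ∑ i, θ i * Umap C θ x i ≤ (∑ i, θ i) / n := by
  have hsum := sum_one_sub_mul_Umap hn hW hθ0 hθ1
  have hexcess : ∑ i, θ i * (Umap C θ x i - 1 / n) ≤ ∑ i, θmax * (Umap C θ x i - 1 / n) :=
    Finset.sum_le_sum fun i _ =>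
      mul_le_mul_of_nonneg_right (hθmax i) (sub_nonneg.2 (one_div_le_Umap hW hθ0 hθ1 i))
  have hcard : ∑ _i : Fin n, 1 / (n : ℝ) = 1 := by
    rw [Finset.sum_const, Finset.card_univ, Fintype.card_fin, nsmul_eq_mul]
    field_simp
  have hθn : ∑ i, θ i * (1 / n) = (∑ i, θ i) / n := by rw [← Finset.sum_mul]; ring
  simp only [mul_sub, sub_mul, one_mul, Finset.sum_sub_distrib, ← Finset.mul_sum, hcard,
    hθn] at hexcess hsum
  rw [show ∑ i, Umap C θ x i = 1 + ∑ i, θ i * Umap C θ x i by linarith] at hexcess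
  linarith

lemma mul_Umap_le (hn : 0 < n) (hW : Wmat C x ∈ rowStochastic ℝ (Fin n))
    (hθ0 : ∀ i, 0 ≤ θ i) (hθ1 : ∀ i, θ i < 1) {θmax : ℝ} (hθmax : ∀ i, θ i ≤ θmax)
    (hθmax1 : θmax < 1) (k : Fin n) :
    θ k * Umap C θ x k ≤ θmax * (1 / n + (∑ i, θ i) / n / (1 - θmax)) := by
  have hs : ∑ i, θ i * Umap C θ x i ≤ (∑ i, θ i) / n / (1 - θmax) := by
    rw [le_div_iff₀ (sub_pos.2 hθmax1), mul_comm]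
    exact one_sub_mul_sum_mul_Umap_le hn hW hθ0 hθ1 hθmax
  calc θ k * Umap C θ x k ≤ θmax * Umap C θ x k :=
        mul_le_mul_of_nonneg_right (hθmax k) (Umap_nonneg hW hθ0 hθ1 k)
    _ ≤ θmax * (1 / n + (∑ i, θ i) / n / (1 - θmax)) := by
        have := (hθ0 k).trans (hθmax k)
        gcongr
        exact (Umap_le hW hθ0 hθ1 k).trans (by gcongr)

lemma sum_abs_Fmap_sub_le_mul (hn : 0 < n) (hC : C ∈ rowStochastic ℝ (Fin n))
    (hWx : Wmat C x ∈ rowStochastic ℝ (Fin n)) (hWz : Wmat C z ∈ rowStochastic ℝ (Fin n))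
    (hθ0 : ∀ i, 0 ≤ θ i) (hθ1 : ∀ i, θ i < 1) {θmax : ℝ} (hθmax : ∀ i, θ i ≤ θmax)
    (hθmax1 : θmax < 1) :
    ∑ j, |Fmap C θ x j - Fmap C θ z j|
      ≤ 2 * θmax * (1 / n + (∑ i, θ i) / n / (1 - θmax)) * ∑ k, |x k - z k| := by
  refine (sum_abs_Fmap_sub_le hC hWx hWz hθ0 hθ1).trans ?_
  rw [mul_assoc 2 θmax, mul_assoc 2, Finset.mul_sum (a := θmax * _)]
  gcongr 2 * ?_
  exact Finset.sum_le_sum fun k _ =>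
    mul_le_mul_of_nonneg_right (mul_Umap_le hn hWz hθ0 hθ1 hθmax hθmax1 k) (abs_nonneg _)

end SocialPower

lemma two_mul_mul_lt_one {n θmin θmax S : ℝ} (hn : 0 < n) (hθmax0 : 0 ≤ θmax)
    (hθmax1 : θmax < 1) (hmin : θmin ≤ θmax) (hS : θmin ≤ S)
    (h : θmax < n / (n + 2 * (1 + (S - θmin)))) :
    2 * θmax * (1 / n + S / n / (1 - θmax)) < 1 := by
  have h1 : 0 < 1 - θmax := sub_pos.2 hθmax1
  rw [lt_div_iff₀ (by linarith)] at h
  have key : 2 * θmax * ((1 - θmax) + S) < n * (1 - θmax) := by nlinarith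
  have hform : 2 * θmax * (1 / n + S / n / (1 - θmax))
      = 2 * θmax * ((1 - θmax) + S) / (n * (1 - θmax)) := by
    field_simp
  rwa [hform, div_lt_one (by positivity)]

theorem stmt7_general (n : ℕ) (C : Matrix (Fin n) (Fin n) ℝ)
    (hCnonneg : ∀ i j, 0 ≤ C i j) (hCrow : ∀ i, ∑ j, C i j = 1)
    (θ : Fin n → ℝ) (hθ0 : ∀ i, 0 ≤ θ i) (hθ1 : ∀ i, θ i < 1)
    (θmin θmax θave ζ : ℝ)
    (hθmin : IsLeast (Set.range θ) θmin) (hθmax : IsGreatest (Set.range θ) θmax)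
    (hθave : θave = (∑ i, θ i) / n) (hζ : ζ = n * θave - θmin)
    (hcond : θmax < n / (n + 2 * (1 + ζ))) :
    ∃! x : Fin n → ℝ, x ∈ simplex n ∧ Fmap C θ x = x := by
  obtain ⟨jmax, hjmax⟩ := hθmax.1
  obtain ⟨jmin, hjmin⟩ := hθmin.1
  have hn : 0 < n := jmax.pos
  have hθle : ∀ i, θ i ≤ θmax := fun i => hθmax.2 ⟨i, rfl⟩
  have hθmax1 : θmax < 1 := hjmax ▸ hθ1 jmax
  have hC : C ∈ rowStochastic ℝ (Fin n) := mem_rowStochastic_iff_sum.2 ⟨hCnonneg, hCrow⟩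
  have hW : ∀ x ∈ simplex n, Wmat C x ∈ rowStochastic ℝ (Fin n) := fun x hx =>
    Wmat_mem_rowStochastic hC hx.1 (le_one_of_mem_simplex hx)
  have hL : 2 * θmax * (1 / n + (∑ i, θ i) / n / (1 - θmax)) < 1 := by
    refine two_mul_mul_lt_one (by positivity) (hjmax ▸ hθ0 jmax) hθmax1 (hjmin ▸ hθle jmin)
      (hjmin ▸ Finset.single_le_sum (fun i _ => hθ0 i) (Finset.mem_univ jmin)) ?_
    rwa [hζ, hθave, mul_div_cancel₀ _ (by positivity)] at hcond
  exact existsUnique_fixedPoint_of_sum_abs_le isClosed_simplex ⟨_, const_mem_simplex hn⟩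
    (fun x hx => Fmap_mem_simplex hn (hW x hx) hθ0 hθ1) hL
    fun x hx z hz => sum_abs_Fmap_sub_le_mul hn hC (hW x hx) (hW z hz) hθ0 hθ1 hθle hθmax1

theorem stmt7 (n : ℕ) (hn : 2 ≤ n) (C : Matrix (Fin n) (Fin n) ℝ)
    (hCnonneg : ∀ i j, 0 ≤ C i j) (hCrow : ∀ i, ∑ j, C i j = 1)
    (hCdiag : ∀ i, C i i = 0)
    (θ : Fin n → ℝ) (hθ0 : ∀ i, 0 ≤ θ i) (hθ1 : ∀ i, θ i < 1) (hθex : ∃ j, 0 < θ j)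
    (θmin θmax θave ζ : ℝ)
    (hθmin : IsLeast (Set.range θ) θmin) (hθmax : IsGreatest (Set.range θ) θmax)
    (hθave : θave = (∑ i, θ i) / n) (hζ : ζ = n * θave - θmin)
    (hcond : θmax < n / (n + 2 * (1 + ζ))) :
    ∃! x : Fin n → ℝ, x ∈ simplex n ∧ Fmap C θ x = x :=
  stmt7_general n C hCnonneg hCrow θ hθ0 hθ1 θmin θmax θave ζ hθmin hθmax hθave hζ hcond
end

section
/- Let x* ∈ Δ_n be any fixed point of F. If i is fully stubborn (θ_i = 0), j is partially stubborn (θ_j > 0), and C_ki = C_kj for every partially stubborn k with k ≠ j, then x*_i > x*_j. -/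
open Matrix

lemma Wmat_apply' {n : ℕ} (C : Matrix (Fin n) (Fin n) ℝ) (x : Fin n → ℝ) (l k : Fin n) :
    Wmat C x l k = (if l = k then x l else 0) + (1 - x l) * C l k := by
  have h : (1 : Matrix (Fin n) (Fin n) ℝ) - Matrix.diagonal x
      = Matrix.diagonal (fun m => 1 - x m) := by
    rw [← Matrix.diagonal_one, Matrix.diagonal_sub]
  simp [Wmat, h, Matrix.add_apply, Matrix.diagonal_apply, Matrix.diagonal_mul]

theorem stmt9 (n : ℕ) (hn : 2 ≤ n) (C : Matrix (Fin n) (Fin n) ℝ)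
    (hCnonneg : ∀ i j, 0 ≤ C i j) (hCrow : ∀ i, ∑ j, C i j = 1)
    (hCdiag : ∀ i, C i i = 0)
    (θ : Fin n → ℝ) (hθ0 : ∀ i, 0 ≤ θ i) (hθ1 : ∀ i, θ i < 1) (hθex : ∃ j, 0 < θ j)
    (xstar : Fin n → ℝ) (hmem : xstar ∈ simplex n) (hfix : Fmap C θ xstar = xstar)
    (i j : Fin n) (hi : θ i = 0) (hj : 0 < θ j)
    (hC : ∀ k, 0 < θ k → k ≠ j → C k i = C k j) :
    xstar j < xstar i := by
  obtain ⟨hx0, hxsum⟩ := hmem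
  set W := Wmat C xstar with hW
  set D := Matrix.diagonal θ with hD
  set M := (1 : Matrix (Fin n) (Fin n) ℝ) - Wᵀ * D with hM
  have hx1 : ∀ k, xstar k ≤ 1 := by
    intro k
    calc xstar k ≤ ∑ l, xstar l :=
        Finset.single_le_sum (fun l _ => hx0 l) (Finset.mem_univ k)
      _ = 1 := hxsum
  have hWapp : ∀ l k, W l k = (if l = k then xstar l else 0) + (1 - xstar l) * C l k :=
    Wmat_apply' C xstar
  have hWnn : ∀ l k, 0 ≤ W l k := by
    intro l k
    rw [hWapp]
    have : 0 ≤ (1 - xstar l) * C l k :=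
      mul_nonneg (by linarith [hx1 l]) (hCnonneg l k)
    split <;> [linarith [hx0 l]; linarith]
  have hWrow : ∀ l, ∑ k, W l k = 1 := by
    intro l
    simp only [hWapp]
    rw [Finset.sum_add_distrib, Finset.sum_ite_eq Finset.univ l (fun _ => xstar l),
      ← Finset.mul_sum, hCrow]
    simp
  have hWle1 : ∀ l k, W l k ≤ 1 := by
    intro l k
    calc W l k ≤ ∑ m, W l m :=
        Finset.single_le_sum (fun m _ => hWnn l m) (Finset.mem_univ k)
      _ = 1 := hWrow l
  have h1θ : ∀ k, 0 < 1 - θ k := fun k => by linarith [hθ1 k]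
  -- determinant nonzero
  have hAdet : (1 - D * W).det ≠ 0 := by
    apply det_ne_zero_of_sum_row_lt_diag
    intro k
    have hdiag : ((1 : Matrix (Fin n) (Fin n) ℝ) - D * W) k k = 1 - θ k * W k k := by
      simp [hD, Matrix.sub_apply, Matrix.diagonal_mul]
    have hoff : ∀ l, l ≠ k → ((1 : Matrix (Fin n) (Fin n) ℝ) - D * W) k l = -(θ k * W k l) := by
      intro l hl
      simp [hD, Matrix.sub_apply, Matrix.diagonal_mul, Matrix.one_apply, Ne.symm hl]
    have hsum : ∑ l ∈ Finset.univ.erase k, ‖((1 : Matrix (Fin n) (Fin n) ℝ) - D * W) k l‖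
        = θ k * (1 - W k k) := by
      have e1 : ∀ l ∈ Finset.univ.erase k,
          ‖((1 : Matrix (Fin n) (Fin n) ℝ) - D * W) k l‖ = θ k * W k l := by
        intro l hl
        rw [hoff l (Finset.ne_of_mem_erase hl), norm_neg, Real.norm_eq_abs,
          abs_of_nonneg (mul_nonneg (hθ0 k) (hWnn k l))]
      rw [Finset.sum_congr rfl e1, ← Finset.mul_sum]
      congr 1
      have := hWrow k
      rw [← Finset.add_sum_erase _ _ (Finset.mem_univ k)] at this
      linarith
    rw [hsum, hdiag]
    have hWkk1 : θ k * W k k ≤ θ k := by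
      nlinarith [hθ0 k, hWle1 k k, hWnn k k]
    rw [Real.norm_eq_abs, abs_of_nonneg (by linarith [hθ1 k])]
    nlinarith [hθ1 k, hθ0 k, hWnn k k, hWle1 k k]
  have hMA : M = (1 - D * W)ᵀ := by
    rw [Matrix.transpose_sub, Matrix.transpose_one, Matrix.transpose_mul,
      Matrix.diagonal_transpose]
  have hMdet : M.det ≠ 0 := by
    rw [hMA, Matrix.det_transpose]; exact hAdet
  set y : Fin n → ℝ := fun k => (1 - θ k)⁻¹ * xstar k with hy
  set c : Fin n → ℝ := fun _ => 1 / (n : ℝ) with hc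
  -- from the fixed point equation
  have hfix' : ((1 - D) * M⁻¹).mulVec c = xstar := hfix
  have hinv : M⁻¹.mulVec c = y := by
    funext k
    have h1 : ((1 - D) * M⁻¹).mulVec c k = (1 - θ k) * (M⁻¹.mulVec c) k := by
      rw [← Matrix.mulVec_mulVec]
      have : (1 : Matrix (Fin n) (Fin n) ℝ) - D = Matrix.diagonal (fun m => 1 - θ m) := by
        rw [hD, ← Matrix.diagonal_one, Matrix.diagonal_sub]
      rw [this, Matrix.mulVec_diagonal]
    have h2 := congrFun hfix' k
    rw [h1] at h2
    show (M⁻¹ *ᵥ c) k = (1 - θ k)⁻¹ * xstar k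
    rw [← h2, inv_mul_cancel_left₀ (ne_of_gt (h1θ k))]
  have hMy : M.mulVec y = c := by
    rw [← hinv, Matrix.mulVec_mulVec, Matrix.mul_nonsing_inv _ hMdet.isUnit, Matrix.one_mulVec]
  have heq : ∀ k, y k = 1 / (n : ℝ) + ∑ l, W l k * (θ l * y l) := by
    intro k
    have h1 := congrFun hMy k
    have h2 : M.mulVec y k = ∑ l, ((if k = l then 1 else 0) - W l k * θ l) * y l := by
      rw [Matrix.mulVec, dotProduct]
      apply Finset.sum_congr rfl
      intro l _
      congr 1
      rw [hM, Matrix.sub_apply, Matrix.mul_diagonal, Matrix.transpose_apply, Matrix.one_apply]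
    rw [h2] at h1
    simp only [sub_mul, ite_mul, one_mul, zero_mul, Finset.sum_sub_distrib,
      Finset.sum_ite_eq Finset.univ k] at h1
    simp only [Finset.mem_univ, if_true] at h1
    have : y k - ∑ l, W l k * θ l * y l = 1 / (n : ℝ) := h1
    rw [Finset.sum_congr rfl (fun l _ => (mul_assoc (W l k) (θ l) (y l)))] at this
    linarith
  have hy0 : ∀ k, 0 ≤ y k := fun k =>
    mul_nonneg (le_of_lt (inv_pos.mpr (h1θ k))) (hx0 k)
  have hnpos : 0 < 1 / (n : ℝ) := by positivity
  have hypos : ∀ k, 1 / (n : ℝ) ≤ y k := by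
    intro k
    rw [heq k]
    have : 0 ≤ ∑ l, W l k * (θ l * y l) :=
      Finset.sum_nonneg fun l _ => mul_nonneg (hWnn l k) (mul_nonneg (hθ0 l) (hy0 l))
    linarith
  have hij : i ≠ j := by intro h; subst h; rw [hi] at hj; exact lt_irrefl 0 hj
  have hyi : y i = xstar i := by rw [hy]; simp [hi]
  have hxj : xstar j = (1 - θ j) * y j := by
    rw [hy]
    exact (mul_inv_cancel_left₀ (ne_of_gt (h1θ j)) _).symm
  -- subtract the two equations
  have hsub : xstar i - y j = ∑ l, (W l i - W l j) * (θ l * y l) := by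
    have h1 := heq i
    have h2 := heq j
    rw [hyi] at h1
    have : ∑ l, (W l i - W l j) * (θ l * y l)
        = ∑ l, W l i * (θ l * y l) - ∑ l, W l j * (θ l * y l) := by
      rw [← Finset.sum_sub_distrib]
      exact Finset.sum_congr rfl fun l _ => by ring
    rw [this]
    linarith
  have hsum1 : ∑ l, (W l i - W l j) * (θ l * y l) = (W j i - W j j) * (θ j * y j) := by
    apply Finset.sum_eq_single j
    · intro l _ hl
      rcases eq_or_lt_of_le (hθ0 l) with h0 | hpos
      · rw [← h0]; ring
      · have hli : l ≠ i := fun h => by rw [h, hi] at hpos; exact lt_irrefl 0 hpos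
        have : W l i = W l j := by
          rw [hWapp, hWapp, if_neg hli, if_neg hl, hC l hpos hl]
        rw [this]; ring
    · intro h; exact absurd (Finset.mem_univ j) h
  have hWji : W j i - W j j = (1 - xstar j) * C j i - xstar j := by
    rw [hWapp, hWapp, if_neg (Ne.symm hij), if_pos rfl, hCdiag j]
    ring
  have hkey : xstar i = y j + ((1 - xstar j) * C j i - xstar j) * (θ j * y j) := by
    rw [hsum1, hWji] at hsub
    linarith
  -- xstar j < 1
  have hxi_pos : 1 / (n : ℝ) ≤ xstar i := by rw [← hyi]; exact hypos i
  have hxj1 : xstar j < 1 := by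
    have : xstar i + xstar j ≤ ∑ l, xstar l := by
      have h1 : ∑ l ∈ ({i, j} : Finset (Fin n)), xstar l ≤ ∑ l, xstar l :=
        Finset.sum_le_sum_of_subset_of_nonneg (Finset.subset_univ _)
          (fun l _ _ => hx0 l)
      rwa [Finset.sum_pair hij] at h1
    rw [hxsum] at this
    linarith
  have hyjpos : 0 < y j := lt_of_lt_of_le hnpos (hypos j)
  nlinarith [mul_pos (mul_pos hj hyjpos) (mul_pos (by linarith : (0:ℝ) < 1 - xstar j)
    (by linarith [hCnonneg j i] : (0:ℝ) < 1 + C j i))]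
end
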